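/- For every cycle-star graph G on n vertices whose cycle has length c ≥ 4, there exists a cycle-star graph G′ on n vertices whose cycle has length 3 such that H_A(G) < H_A(G′). -/

import Mathlib

open Finset SimpleGraph

/-- Degree of a vertex (number of neighbors). -/
noncomputable def deg {V : Type*} [Fintype V] (G : SimpleGraph V) (v : V) : ℕ :=
  Nat.card {w // G.Adj v w}

open scoped Classical in
/-- Additively weighted Harary index: sum over unordered pairs of distinct
vertices of (deg u + deg v) / d(u,v). -/
noncomputable def HA {V : Type*} [Fintype V] (G : SimpleGraph V) : ℝ :=
  (1/2) * ∑ u : V, ∑ v : V, if u = v then 0 else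
    ((deg G u + deg G v : ℕ) : ℝ) / (G.dist u v)

/-- A unicyclic graph: connected with as many edges as vertices. -/
def Unicyclic {V : Type*} [Fintype V] (G : SimpleGraph V) : Prop :=
  G.Connected ∧ Nat.card G.edgeSet = Fintype.card V

/-- k-th harmonicNum number. -/
noncomputable def harmonicNum (k : ℕ) : ℝ := ∑ i ∈ Finset.range k, (1 : ℝ) / (i + 1)

/-- CS_{3,n-3}: a triangle on vertices 0,1,2 with n-3 leaves attached to vertex 0. -/
def cycleStar3 (n : ℕ) : SimpleGraph (Fin n) :=
  SimpleGraph.fromRel (fun i j => ((i : ℕ) < 3 ∧ (j : ℕ) < 3) ∨ ((i : ℕ) = 0 ∧ 3 ≤ (j : ℕ)))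

/-- CP_{k,n-k}: cycle 0,...,k-1 with the path k,k+1,...,n-1 attached to vertex 0
(for k = n this is just the cycle C_n). -/
def cyclePath (n k : ℕ) : SimpleGraph (Fin n) :=
  SimpleGraph.fromRel (fun i j =>
    ((i : ℕ) < k ∧ (j : ℕ) < k ∧ ((j : ℕ) = (i : ℕ) + 1 ∨ ((i : ℕ) = 0 ∧ (j : ℕ) = k - 1)))
    ∨ ((i : ℕ) = 0 ∧ (j : ℕ) = k)
    ∨ (k ≤ (i : ℕ) ∧ (j : ℕ) = (i : ℕ) + 1))

/-- A vertex lies on a cycle of G. -/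
def OnCycle {V : Type*} (G : SimpleGraph V) (v : V) : Prop :=
  ∃ p : G.Walk v v, p.IsCycle

/-- Cycle-star graph: unicyclic, and every vertex of degree ≥ 2 lies on the cycle
(equivalently, every non-cycle vertex is a leaf attached to a cycle vertex). -/
def IsCycleStar {V : Type*} [Fintype V] (G : SimpleGraph V) : Prop :=
  Unicyclic G ∧ ∀ v, 2 ≤ deg G v → OnCycle G v

/-- Cycle-path graph: unicyclic, cycle vertices have degree ≤ 3 and non-cycle
vertices have degree ≤ 2 (at most one pendant path per cycle vertex). -/
def IsCyclePath {V : Type*} [Fintype V] (G : SimpleGraph V) : Prop :=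
  Unicyclic G ∧ ∀ v, (OnCycle G v → deg G v ≤ 3) ∧ (¬ OnCycle G v → deg G v ≤ 2)

/-- Length of the unique cycle of a unicyclic graph: number of vertices on a cycle. -/
noncomputable def cycleLength {V : Type*} [Fintype V] (G : SimpleGraph V) : ℕ :=
  Nat.card {v // OnCycle G v}

/-- Value of H_A(CP_{3,n-3}). -/
noncomputable def CPval (n : ℕ) : ℝ :=
  4 * ∑ i ∈ Finset.range (n - 2), harmonicNum (n - i - 2)
    + harmonicNum (n - 3) + 3 * harmonicNum (n - 2) + (6 * (n : ℝ) - 13) / ((n : ℝ) - 2)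

/-!
Each term of `HA` is at most `(deg u + deg v) / 2`, plus another `(deg u + deg v) / 2` when
`u ~ v`, with equality when the diameter is at most `2`. Summing, `2 HA(G) ≤ (n - 1) Σ deg + Σ deg²`
with `Σ deg = 2n` for unicyclic graphs, so only `Σ deg²` matters. In a cycle-star graph with
cycle length `c` the leaves have degree `1` and the `c` cycle vertices have degree `≥ 2` and
total degree `n + c`, so `Σ deg² ≤ (n - c)² + 5n - c ≤ n² - 3n + 12` once `c ≥ 4`. The graph
`cycleStar3 n` has a vertex adjacent to all others, hence diameter `2`, and
`Σ deg² = n² - n + 6`, which is larger as soon as `n ≥ 4`.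
-/

open scoped Classical

section HararyBound

-- Unreachable pairs have `dist = 0`, where division by zero gives `0`.
lemma ite_div_dist_le {V : Type*} (G : SimpleGraph V) (u v : V) (x : ℝ) (hx : 0 ≤ x) :
    (if u = v then 0 else x / G.dist u v)
      ≤ (if u = v then 0 else x) / 2 + (if G.Adj u v then x else 0) / 2 := by
  by_cases huv : u = v
  · simp [huv]
  by_cases hadj : G.Adj u v
  · simp [huv, hadj, dist_eq_one_iff_adj.2 hadj]
  simp only [huv, hadj, if_false, zero_div, add_zero]
  rcases Nat.lt_or_ge (G.dist u v) 2 with hd | hd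
  · have : G.dist u v = 0 := by
      have : G.dist u v ≠ 1 := fun h => hadj (dist_eq_one_iff_adj.1 h)
      omega
    simp [this]; positivity
  · gcongr; exact_mod_cast hd

lemma ite_div_dist_eq {V : Type*} {G : SimpleGraph V} (hG : G.Connected) (u v : V)
    (hd : G.dist u v ≤ 2) (x : ℝ) :
    (if u = v then 0 else x / G.dist u v)
      = (if u = v then 0 else x) / 2 + (if G.Adj u v then x else 0) / 2 := by
  by_cases huv : u = v
  · simp [huv]
  by_cases hadj : G.Adj u v
  · simp [huv, hadj, dist_eq_one_iff_adj.2 hadj]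
  have : G.dist u v = 2 := by
    have h0 := hG.pos_dist_of_ne huv
    have : G.dist u v ≠ 1 := fun h => hadj (dist_eq_one_iff_adj.1 h)
    omega
  simp [huv, hadj, this]

variable {V : Type*} [Fintype V] (G : SimpleGraph V)

lemma deg_eq_card_filter_adj (v : V) : deg G v = #{w | G.Adj v w} := by
  rw [deg, Nat.card_eq_fintype_card, Fintype.card_subtype]

lemma deg_eq_degree (v : V) : deg G v = G.degree v := by
  rw [deg_eq_card_filter_adj, ← card_neighborFinset_eq_degree, neighborFinset_eq_filter]

lemma sum_deg_eq_two_mul_card_edgeSet : ∑ v, deg G v = 2 * Nat.card G.edgeSet := by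
  simp only [deg_eq_degree, sum_degrees_eq_twice_card_edges, Nat.card_eq_fintype_card,
    edgeFinset, Set.toFinset_card]

lemma two_le_deg_of_onCycle {v : V} (h : OnCycle G v) : 2 ≤ deg G v := by
  obtain ⟨p, hp⟩ := h
  rw [deg_eq_card_filter_adj, ← card_pair hp.snd_ne_penultimate]
  refine card_le_card fun w hw => ?_
  rcases mem_insert.1 hw with rfl | hw
  · simpa using p.adj_snd hp.not_nil
  · simpa [mem_singleton.1 hw] using (p.adj_penultimate hp.not_nil).symm

lemma sum_ite_adj_const (u : V) (x : ℝ) :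
    ∑ v, (if G.Adj u v then x else 0) = deg G u * x := by
  rw [← sum_filter, sum_const, nsmul_eq_mul, deg_eq_card_filter_adj]

lemma sum_offDiag_deg_add :
    ∑ u, ∑ v, (if u = v then 0 else ((deg G u + deg G v : ℕ) : ℝ))
      = 2 * (Fintype.card V - 1) * ∑ v, (deg G v : ℝ) := by
  have h (u v : V) : (if u = v then 0 else ((deg G u + deg G v : ℕ) : ℝ))
      = deg G u + deg G v - if u = v then 2 * (deg G u : ℝ) else 0 := by
    split_ifs with h
    · subst h; ring
    · simp
  simp only [h, sum_sub_distrib, sum_add_distrib, sum_ite_eq, mem_univ, if_true, sum_const,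
    card_univ, nsmul_eq_mul, ← mul_sum]
  ring

lemma sum_adj_deg_add :
    ∑ u, ∑ v, (if G.Adj u v then ((deg G u + deg G v : ℕ) : ℝ) else 0)
      = 2 * ∑ v, (deg G v : ℝ) ^ 2 := by
  have h (u v : V) : (if G.Adj u v then ((deg G u + deg G v : ℕ) : ℝ) else 0)
      = (if G.Adj u v then (deg G u : ℝ) else 0) + (if G.Adj v u then (deg G v : ℝ) else 0) := by
    rw [G.adj_comm v u]
    by_cases huv : G.Adj u v <;> simp [huv]
  rw [sum_congr rfl fun u _ => sum_congr rfl fun v _ => h u v]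
  simp only [sum_add_distrib]
  rw [sum_comm (f := fun u v => if G.Adj v u then (deg G v : ℝ) else 0)]
  simp only [sum_ite_adj_const, ← sq, two_mul]

lemma two_mul_HA_le :
    2 * HA G ≤ (Fintype.card V - 1) * ∑ v, (deg G v : ℝ) + ∑ v, (deg G v : ℝ) ^ 2 := by
  have h := sum_le_sum fun u (_ : u ∈ univ) => sum_le_sum fun v (_ : v ∈ univ) =>
    ite_div_dist_le G u v ((deg G u + deg G v : ℕ) : ℝ) (Nat.cast_nonneg _)
  simp only [sum_add_distrib, ← sum_div, sum_offDiag_deg_add, sum_adj_deg_add] at h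
  rw [HA]; linarith

lemma two_mul_HA_eq_of_dist_le_two (hG : G.Connected) (hd : ∀ u v, G.dist u v ≤ 2) :
    2 * HA G = (Fintype.card V - 1) * ∑ v, (deg G v : ℝ) + ∑ v, (deg G v : ℝ) ^ 2 := by
  have h := sum_congr rfl fun u (_ : u ∈ univ) => sum_congr rfl fun v (_ : v ∈ univ) =>
    ite_div_dist_eq hG u v (hd u v) ((deg G u + deg G v : ℕ) : ℝ)
  simp only [sum_add_distrib, ← sum_div, sum_offDiag_deg_add, sum_adj_deg_add] at h
  rw [HA, h]; ring

end HararyBound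

lemma sum_sq_le_of_two_le {ι : Type*} (s : Finset ι) (f : ι → ℝ) (hf : ∀ i ∈ s, 2 ≤ f i) :
    ∑ i ∈ s, f i ^ 2 ≤ (∑ i ∈ s, f i - 2 * #s) ^ 2 + 4 * (∑ i ∈ s, f i - #s) := by
  have hsq := sum_sq_le_sq_sum_of_nonneg (s := s) (f := fun i => f i - 2)
    fun i hi => sub_nonneg.2 (hf i hi)
  have hsum : ∑ i ∈ s, (f i - 2) = ∑ i ∈ s, f i - 2 * #s := by
    rw [sum_sub_distrib, sum_const, nsmul_eq_mul]; ring
  have hexp : ∑ i ∈ s, f i ^ 2 = ∑ i ∈ s, (f i - 2) ^ 2 + 4 * ∑ i ∈ s, f i - 4 * #s := by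
    simp only [sub_sq, sum_add_distrib, sum_sub_distrib, sum_const, nsmul_eq_mul, ← sum_mul,
      ← mul_sum]
    ring
  rw [hsum] at hsq
  linarith

section CycleStar

variable {V : Type*} [Fintype V] {G : SimpleGraph V}

lemma cycleLength_eq_card_filter : cycleLength G = #{v | OnCycle G v} := by
  rw [cycleLength, Nat.card_eq_fintype_card, Fintype.card_subtype]

lemma cycleLength_le_card : cycleLength G ≤ Fintype.card V := by
  rw [cycleLength_eq_card_filter]; exact card_filter_le _ _

lemma Unicyclic.sum_deg (hG : Unicyclic G) : ∑ v, (deg G v : ℝ) = 2 * Fintype.card V := by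
  rw [← hG.2]; exact_mod_cast sum_deg_eq_two_mul_card_edgeSet G

lemma IsCycleStar.deg_eq_one [Nontrivial V] (hG : IsCycleStar G) {v : V} (hv : ¬ OnCycle G v) :
    deg G v = 1 := by
  have hpos : 0 < deg G v := by
    rw [deg_eq_degree]; exact hG.1.1.preconnected.degree_pos_of_nontrivial v
  have := mt (hG.2 v) hv
  omega

lemma IsCycleStar.sum_deg_sq_le [Nontrivial V] (hG : IsCycleStar G) :
    ∑ v, (deg G v : ℝ) ^ 2
      ≤ ((Fintype.card V : ℝ) - cycleLength G) ^ 2 + 5 * Fintype.card V - cycleLength G := by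
  set S : Finset V := {v | OnCycle G v}
  have hc : (cycleLength G : ℝ) = #S := by rw [cycleLength_eq_card_filter]
  have hleaf : ∀ v ∈ Sᶜ, (deg G v : ℝ) = 1 := fun v hv => by
    rw [hG.deg_eq_one (by simpa [S] using hv), Nat.cast_one]
  have hcard : (#Sᶜ : ℝ) = Fintype.card V - #S := by
    rw [card_compl, Nat.cast_sub (card_le_univ S)]
  have hsum : ∑ v ∈ S, (deg G v : ℝ) = Fintype.card V + #S := by
    have := hG.1.sum_deg
    rw [← sum_add_sum_compl S, sum_congr rfl hleaf, sum_const, nsmul_one, hcard] at this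
    linarith
  have hS := sum_sq_le_of_two_le S (fun v => (deg G v : ℝ)) fun v hv =>
    by exact_mod_cast two_le_deg_of_onCycle G (by simpa [S] using hv)
  have hleaf_sq : ∑ v ∈ Sᶜ, (deg G v : ℝ) ^ 2 = Fintype.card V - #S := by
    rw [sum_congr rfl fun v hv => by rw [hleaf v hv], sum_const, one_pow, nsmul_one, hcard]
  rw [hsum] at hS
  rw [← sum_add_sum_compl S, hleaf_sq, hc]
  nlinarith

lemma IsCycleStar.two_mul_HA_le [Nontrivial V] (hG : IsCycleStar G) :
    2 * HA G ≤ ((Fintype.card V : ℝ) - 1) * (2 * Fintype.card V)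
      + (((Fintype.card V : ℝ) - cycleLength G) ^ 2 + 5 * Fintype.card V - cycleLength G) := by
  have h := _root_.two_mul_HA_le G
  rw [hG.1.sum_deg] at h
  linarith [hG.sum_deg_sq_le]

end CycleStar

section Hub

variable {V : Type*} {G : SimpleGraph V} {a : V}

lemma dist_le_one_of_forall_adj (ha : ∀ v, v ≠ a → G.Adj a v) (v : V) : G.dist a v ≤ 1 := by
  by_cases hv : v = a
  · simp [hv]
  · exact (dist_eq_one_iff_adj.2 (ha v hv)).le

lemma connected_of_forall_adj (ha : ∀ v, v ≠ a → G.Adj a v) : G.Connected := by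
  refine (connected_iff_exists_forall_reachable G).2 ⟨a, fun v => ?_⟩
  by_cases hv : v = a
  · rw [hv]
  · exact (ha v hv).reachable

lemma dist_le_two_of_forall_adj (ha : ∀ v, v ≠ a → G.Adj a v) (u v : V) : G.dist u v ≤ 2 :=
  calc G.dist u v ≤ G.dist u a + G.dist a v := (connected_of_forall_adj ha).dist_triangle
    _ ≤ 1 + 1 := by
      rw [dist_comm]
      exact add_le_add (dist_le_one_of_forall_adj ha u) (dist_le_one_of_forall_adj ha v)

end Hub

section CycleStar3

variable {n : ℕ}

lemma cycleStar3_adj_iff (u v : Fin n) :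
    (cycleStar3 n).Adj u v ↔ u ≠ v ∧ ((u : ℕ) = 0 ∨ (v : ℕ) = 0 ∨ ((u : ℕ) < 3 ∧ (v : ℕ) < 3)) := by
  rw [cycleStar3, fromRel_adj]
  omega

lemma cycleStar3_adj_zero (hn : 0 < n) (v : Fin n) (hv : v ≠ ⟨0, hn⟩) :
    (cycleStar3 n).Adj ⟨0, hn⟩ v :=
  (cycleStar3_adj_iff _ _).2 ⟨hv.symm, Or.inl rfl⟩

lemma deg_cycleStar3 (hn : 3 ≤ n) (v : Fin n) :
    deg (cycleStar3 n) v = if (v : ℕ) = 0 then n - 1 else if (v : ℕ) < 3 then 2 else 1 := by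
  obtain ⟨v, hv⟩ := v
  rw [deg_eq_card_filter_adj, card_filter]
  simp only [cycleStar3_adj_iff, ne_eq, Fin.ext_iff]
  rw [Fin.sum_univ_eq_sum_range
    (fun w => if ¬v = w ∧ (v = 0 ∨ w = 0 ∨ v < 3 ∧ w < 3) then 1 else 0)]
  obtain ⟨m, rfl⟩ := Nat.exists_eq_add_of_le' hn
  have htail : ∑ w ∈ range m,
    (if ¬v = w + 1 + 1 + 1 ∧ (v = 0 ∨ w + 1 + 1 + 1 = 0 ∨ v < 3 ∧ w + 1 + 1 + 1 < 3) then 1 else 0)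
      = if v = 0 then m else 0 := by
    split_ifs with h0 <;> simp [h0]
  simp only [sum_range_succ', htail]
  by_cases h0 : v = 0
  · simp [h0]
  · simp [h0]
    split_ifs <;> omega

lemma sum_comp_deg_cycleStar3 (hn : 3 ≤ n) (g : ℕ → ℝ) :
    ∑ v, g (deg (cycleStar3 n) v) = g (n - 1) + 2 * g 2 + (n - 3) * g 1 := by
  simp only [deg_cycleStar3 hn]
  rw [Fin.sum_univ_eq_sum_range (fun i => g (if i = 0 then n - 1 else if i < 3 then 2 else 1))]
  obtain ⟨m, rfl⟩ := Nat.exists_eq_add_of_le' hn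
  have hlarge (i : ℕ) : ¬ i + 1 + 1 + 1 < 3 := by omega
  simp [sum_range_succ', hlarge]
  ring

lemma sum_deg_cycleStar3 (hn : 3 ≤ n) : ∑ v, (deg (cycleStar3 n) v : ℝ) = 2 * n := by
  rw [sum_comp_deg_cycleStar3 hn Nat.cast, Nat.cast_sub (by omega)]
  push_cast; ring

lemma sum_deg_sq_cycleStar3 (hn : 3 ≤ n) :
    ∑ v, (deg (cycleStar3 n) v : ℝ) ^ 2 = (n : ℝ) ^ 2 - n + 6 := by
  rw [sum_comp_deg_cycleStar3 hn (fun d => (d : ℝ) ^ 2), Nat.cast_sub (by omega)]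
  push_cast; ring

lemma exists_isCycle_cycleStar3 (hn : 3 ≤ n) :
    ∃ p : (cycleStar3 n).Walk ⟨0, by omega⟩ ⟨0, by omega⟩,
      p.IsCycle ∧ ∀ v : Fin n, (v : ℕ) < 3 → v ∈ p.support := by
  refine ⟨.cons (cycleStar3_adj_zero _ ⟨1, by omega⟩ (by simp))
    (.cons ((cycleStar3_adj_iff ⟨1, by omega⟩ ⟨2, by omega⟩).2 (by simp))
      (.cons ((cycleStar3_adj_iff ⟨2, by omega⟩ ⟨0, by omega⟩).2 (by simp)) .nil)), ?_, ?_⟩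
  · simp [Walk.cons_isCycle_iff, Fin.ext_iff]
  · intro v hv
    simp [Fin.ext_iff]
    omega

lemma onCycle_cycleStar3_iff (hn : 3 ≤ n) (v : Fin n) :
    OnCycle (cycleStar3 n) v ↔ (v : ℕ) < 3 := by
  constructor
  · intro hv
    have := two_le_deg_of_onCycle _ hv
    rw [deg_cycleStar3 hn] at this
    split_ifs at this <;> omega
  · intro hv
    obtain ⟨p, hp, hsupp⟩ := exists_isCycle_cycleStar3 hn
    exact ⟨_, hp.rotate (hsupp v hv)⟩

lemma card_edgeSet_cycleStar3 (hn : 3 ≤ n) : Nat.card (cycleStar3 n).edgeSet = n := by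
  have h := sum_deg_cycleStar3 hn
  rw [← Nat.cast_sum, sum_deg_eq_two_mul_card_edgeSet] at h
  have h' : 2 * Nat.card (cycleStar3 n).edgeSet = 2 * n := by exact_mod_cast h
  omega

lemma isCycleStar_cycleStar3 (hn : 3 ≤ n) : IsCycleStar (cycleStar3 n) := by
  refine ⟨⟨connected_of_forall_adj (cycleStar3_adj_zero (by omega)), ?_⟩, fun v hv => ?_⟩
  · rw [card_edgeSet_cycleStar3 hn, Fintype.card_fin]
  · rw [deg_cycleStar3 hn] at hv
    rw [onCycle_cycleStar3_iff hn]
    split_ifs at hv <;> omega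

lemma cycleLength_cycleStar3 (hn : 3 ≤ n) : cycleLength (cycleStar3 n) = 3 := by
  simp only [cycleLength_eq_card_filter, onCycle_cycleStar3_iff hn, Fin.card_filter_val_lt]
  omega

lemma two_mul_HA_cycleStar3 (hn : 3 ≤ n) :
    2 * HA (cycleStar3 n) = ((n : ℝ) - 1) * (2 * n) + ((n : ℝ) ^ 2 - n + 6) := by
  rw [two_mul_HA_eq_of_dist_le_two _ (connected_of_forall_adj (cycleStar3_adj_zero (by omega)))
    (dist_le_two_of_forall_adj (cycleStar3_adj_zero (by omega))), sum_deg_cycleStar3 hn,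
    sum_deg_sq_cycleStar3 hn, Fintype.card_fin]

end CycleStar3

theorem stmt13 (n : ℕ) (G : SimpleGraph (Fin n)) (hG : IsCycleStar G)
    (hc : 4 ≤ cycleLength G) :
    ∃ G' : SimpleGraph (Fin n), IsCycleStar G' ∧ cycleLength G' = 3 ∧ HA G < HA G' := by
  have hcn : cycleLength G ≤ n := cycleLength_le_card.trans_eq (Fintype.card_fin n)
  have : Nontrivial (Fin n) := Fin.nontrivial_iff_two_le.2 (by omega)
  refine ⟨cycleStar3 n, isCycleStar_cycleStar3 (by omega), cycleLength_cycleStar3 (by omega), ?_⟩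
  have hG_le := hG.two_mul_HA_le
  rw [Fintype.card_fin] at hG_le
  have hstar := two_mul_HA_cycleStar3 (n := n) (by omega)
  have hc4 : (4 : ℝ) ≤ cycleLength G := by exact_mod_cast hc
  have hcn' : (cycleLength G : ℝ) ≤ n := by exact_mod_cast hcn
  have hsq_lt : ((n : ℝ) - cycleLength G) ^ 2 + 5 * n - cycleLength G < (n : ℝ) ^ 2 - n + 6 := by
    nlinarith
  linarith
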